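/- arXiv:1801.03896 — 3 statements merged into one kernel-verified Lean document; each statement's English description precedes it below -/
import Mathlib

section
/- Let W ∈ ℝ^p and define, for c ∈ {0,1} and threshold t > 0, f(W,t) = (#{ℓ : W_ℓ ≥ t})/(c + #{ℓ : W_ℓ ≤ −t}), and T(W) = min{t ∈ {|W_ℓ| : |W_ℓ| > 0} : f(W,t) ≤ q}. For each j let W^j be W with the j-th entry replaced by |W_j|, and T_j = T(W^j). Then for any indices j, k: if W_j ≤ −min{T_j, T_k} and W_k ≤ −min{T_j, T_k}, then T_j = T_k. -/
open Finset

/-- The ratio `f(W,t) = #{ℓ : W_ℓ ≥ t} / (c + #{ℓ : W_ℓ ≤ -t})`. -/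
noncomputable def knockoffRatio {p : ℕ} (c : ℝ) (W : Fin p → ℝ) (t : ℝ) : ℝ :=
  ((univ.filter fun ℓ => t ≤ W ℓ).card : ℝ) /
    (c + ((univ.filter fun ℓ => W ℓ ≤ -t).card : ℝ))

/-- The set of candidate thresholds: positive magnitudes `|W_ℓ|` at which the ratio is ≤ q. -/
noncomputable def thresholdSet {p : ℕ} (c q : ℝ) (W : Fin p → ℝ) : Set ℝ :=
  {t | 0 < t ∧ (∃ ℓ, |W ℓ| = t) ∧ knockoffRatio c W t ≤ q}

lemma abs_update_abs {p : ℕ} (W : Fin p → ℝ) (i ℓ : Fin p) :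
    |Function.update W i |W i| ℓ| = |W ℓ| := by
  rcases eq_or_ne ℓ i with rfl | h
  · simp
  · simp [Function.update_of_ne h]

lemma ratio_update {p : ℕ} (W : Fin p → ℝ) (c t : ℝ) (i : Fin p)
    (ht : 0 < t) (hi : W i ≤ -t) :
    knockoffRatio c (Function.update W i |W i|) t =
      (((univ.filter fun ℓ => t ≤ W ℓ).card : ℝ) + 1) /
        (c + (((univ.filter fun ℓ => W ℓ ≤ -t).card : ℝ) - 1)) := by
  have hiW : W i < t := lt_of_le_of_lt hi (by linarith)
  have habs : t ≤ |W i| := by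
    rw [abs_of_nonpos (by linarith)]; linarith
  have h1 : (univ.filter fun ℓ => t ≤ Function.update W i |W i| ℓ) =
      insert i (univ.filter fun ℓ => t ≤ W ℓ) := by
    ext ℓ
    rcases eq_or_ne ℓ i with rfl | h
    · simp [habs]
    · simp [Function.update_of_ne h, h]
  have h2 : (univ.filter fun ℓ => Function.update W i |W i| ℓ ≤ -t) =
      (univ.filter fun ℓ => W ℓ ≤ -t).erase i := by
    ext ℓ
    rcases eq_or_ne ℓ i with rfl | h
    · simp
      exact lt_of_lt_of_le (by linarith) (abs_nonneg _)
    · simp [Function.update_of_ne h, h]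
  have hinot : i ∉ (univ.filter fun ℓ => t ≤ W ℓ) := by
    simp [not_le.mpr hiW]
  have himem : i ∈ (univ.filter fun ℓ => W ℓ ≤ -t) := by simp [hi]
  have hcard1 : (univ.filter fun ℓ => t ≤ Function.update W i |W i| ℓ).card =
      (univ.filter fun ℓ => t ≤ W ℓ).card + 1 := by
    rw [h1, Finset.card_insert_of_notMem hinot]
  have hpos : 1 ≤ (univ.filter fun ℓ => W ℓ ≤ -t).card :=
    Finset.card_pos.mpr ⟨i, himem⟩
  have hcard2 : (univ.filter fun ℓ => Function.update W i |W i| ℓ ≤ -t).card =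
      (univ.filter fun ℓ => W ℓ ≤ -t).card - 1 := by
    rw [h2, Finset.card_erase_of_mem himem]
  unfold knockoffRatio
  rw [hcard1, hcard2]
  push_cast [Nat.cast_sub hpos]
  ring_nf

theorem leave_one_out_threshold_stability
    {p : ℕ} (W : Fin p → ℝ) (q c : ℝ) (hq : 0 < q) (hq1 : q < 1)
    (hc : c = 0 ∨ c = 1) (j k : Fin p) (Tj Tk : ℝ)
    (hTj : IsLeast (thresholdSet c q (Function.update W j |W j|)) Tj)
    (hTk : IsLeast (thresholdSet c q (Function.update W k |W k|)) Tk)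
    (hWj : W j ≤ -min Tj Tk) (hWk : W k ≤ -min Tj Tk) :
    Tj = Tk := by
  have key : ∀ (a b : Fin p) (Ta Tb : ℝ),
      IsLeast (thresholdSet c q (Function.update W a |W a|)) Ta →
      IsLeast (thresholdSet c q (Function.update W b |W b|)) Tb →
      Ta ≤ Tb → W a ≤ -Ta → W b ≤ -Ta → Tb ≤ Ta := by
    intro a b Ta Tb hA hB _ ha hb
    obtain ⟨⟨htpos, ⟨ℓ, hℓ⟩, hratio⟩, _⟩ := hA
    apply hB.2
    refine ⟨htpos, ⟨ℓ, ?_⟩, ?_⟩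
    · rw [abs_update_abs]; rw [abs_update_abs] at hℓ; exact hℓ
    · rw [ratio_update W c Ta b htpos hb]
      rw [ratio_update W c Ta a htpos ha] at hratio
      exact hratio
  rcases le_total Tj Tk with h | h
  · have hmin : min Tj Tk = Tj := min_eq_left h
    rw [hmin] at hWj hWk
    exact le_antisymm h (key j k Tj Tk hTj hTk h hWj hWk)
  · have hmin : min Tj Tk = Tk := min_eq_right h
    rw [hmin] at hWj hWk
    exact le_antisymm (key k j Tk Tj hTk hTj h hWk hWj) h
end

section
/- Under the setting of the previous lemma (leave-one-out thresholds T_j with the property that W_j ≤ −T_j and W_k ≤ −T_k jointly imply T_j = T_k whenever both signs are negative at the relevant thresholds), if the set S = {j ∈ H : W_j ≤ −T_j} is nonempty for an index set H, then Σ_{j∈H} 1{W_j ≤ −T_j}/(1 + Σ_{k∈H, k≠j} 1{W_k ≤ −T_j}) = 1. -/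
open Finset

theorem leave_one_out_sum_eq_one
    {p : ℕ} (H : Finset (Fin p)) (W T : Fin p → ℝ)
    (hstab : ∀ j ∈ H, ∀ k ∈ H,
      W j ≤ -min (T j) (T k) → W k ≤ -min (T j) (T k) → T j = T k)
    (hne : ∃ j ∈ H, W j ≤ -(T j)) :
    (∑ j ∈ H, (if W j ≤ -(T j) then (1 : ℝ) else 0) /
        (1 + ∑ k ∈ H.erase j, (if W k ≤ -(T j) then (1 : ℝ) else 0))) = 1 := by
  classical
  set S := H.filter (fun j => W j ≤ -(T j)) with hS
  obtain ⟨j0, hj0H, hj0⟩ := hne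
  have hSne : S.Nonempty := ⟨j0, by simp [hS, hj0H, hj0]⟩
  have hSsub : S ⊆ H := filter_subset _ _
  have key : ∀ j ∈ S, ∀ k ∈ H, (W k ≤ -(T j) ↔ k ∈ S) := by
    intro j hj k hk
    have hjH : j ∈ H := (mem_filter.mp hj).1
    have hjW : W j ≤ -(T j) := (mem_filter.mp hj).2
    have h1 : min (T j) (T k) ≤ T j := min_le_left _ _
    have h2 : min (T j) (T k) ≤ T k := min_le_right _ _
    constructor
    · intro h
      have hT : T j = T k := hstab j hjH k hk (by linarith) (by linarith)
      exact mem_filter.mpr ⟨hk, by rw [← hT]; exact h⟩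
    · intro hkS
      have hkW : W k ≤ -(T k) := (mem_filter.mp hkS).2
      have hT : T j = T k := hstab j hjH k hk (by linarith) (by linarith)
      rw [hT]; exact hkW
  have hterm : ∀ j ∈ H,
      (if W j ≤ -(T j) then (1 : ℝ) else 0) /
        (1 + ∑ k ∈ H.erase j, (if W k ≤ -(T j) then (1 : ℝ) else 0))
      = if j ∈ S then (1 : ℝ) / S.card else 0 := by
    intro j hjH
    by_cases hjS : j ∈ S
    · have hjW : W j ≤ -(T j) := (mem_filter.mp hjS).2
      have hinner : ∑ k ∈ H.erase j, (if W k ≤ -(T j) then (1 : ℝ) else 0)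
          = (S.card - 1 : ℕ) := by
        have : ∀ k ∈ H.erase j, (if W k ≤ -(T j) then (1 : ℝ) else 0)
            = if k ∈ S.erase j then 1 else 0 := by
          intro k hk
          have hkH : k ∈ H := mem_of_mem_erase hk
          have hkj : k ≠ j := ne_of_mem_erase hk
          simp only [key j hjS k hkH, mem_erase, hkj, true_and, ne_eq, not_false_eq_true]
        rw [Finset.sum_congr rfl this, Finset.sum_ite_mem]
        have hfe : H.erase j ∩ S.erase j = S.erase j := by
          ext k
          simp only [mem_inter, mem_erase]
          exact ⟨fun h => h.2, fun h => ⟨⟨h.1, hSsub h.2⟩, h⟩⟩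
        rw [hfe]
        simp [Finset.card_erase_of_mem hjS]
      rw [hinner, if_pos hjW, if_pos hjS]
      have hcard : (1 : ℝ) ≤ S.card := by
        exact_mod_cast Nat.one_le_iff_ne_zero.mpr (Finset.card_ne_zero_of_mem hjS)
      have : (1 : ℝ) + ((S.card - 1 : ℕ) : ℝ) = S.card := by
        have := Nat.cast_sub (Nat.one_le_iff_ne_zero.mpr (Finset.card_ne_zero_of_mem hjS)) (R := ℝ)
        push_cast [this]; ring
      rw [this]
    · have hjW : ¬ (W j ≤ -(T j)) := fun h => hjS (mem_filter.mpr ⟨hjH, h⟩)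
      rw [if_neg hjW, if_neg hjS, zero_div]
  rw [Finset.sum_congr rfl hterm, Finset.sum_ite_mem]
  have : H ∩ S = S := inter_eq_right.mpr hSsub
  rw [this, Finset.sum_const, nsmul_eq_mul]
  rw [mul_one_div, div_self]
  exact_mod_cast Finset.card_ne_zero_of_mem hSne.choose_spec
end

section
/- Let X = (X_1,…,X_p) and X̃ = (X̃_1,…,X̃_p) be discrete random vectors such that for every subset A ⊆ {1,…,p}, (X, X̃)_{swap(A)} has the same distribution as (X, X̃). Then for each j, the quadruple (X_j, X̃_j, X_{−j}, X̃_{−j}) has the same distribution as (X̃_j, X_j, X_{−j}, X̃_{−j}). Conversely, if the single-swap equality in distribution holds for all j ∈ A, then (X, X̃)_{swap(A)} =_d (X, X̃). -/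
/-!
Exchanging the coordinates in `A` is the composite of the single exchanges at the `j ∈ A`, so
invariance of the joint law under every single exchange gives invariance under `swap(A)`.
The quadruple `(X_j, X̃_j, X_{-j}, X̃_{-j})` is the image of `(X, X̃)` under a measurable
equivalence that turns `swap({j})` into the exchange of the first two entries; as pushing
forward along a measurable equivalence is injective on measures, the quadruple equality in law
is equivalent to invariance of the law of `(X, X̃)` under `swap({j})`.
-/

open MeasureTheory

section SwapCoords

variable {ι α : Type*} [DecidableEq ι]

def swapCoords (A : Finset ι) (q : (ι → α) × (ι → α)) : (ι → α) × (ι → α) :=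
  (fun j => if j ∈ A then q.2 j else q.1 j, fun j => if j ∈ A then q.1 j else q.2 j)

theorem swapCoords_empty : swapCoords (α := α) (∅ : Finset ι) = id := by
  funext q
  simp [swapCoords]

theorem swapCoords_insert {j : ι} {A : Finset ι} (hj : j ∉ A) :
    swapCoords (α := α) (insert j A) = swapCoords {j} ∘ swapCoords A := by
  funext q
  refine Prod.ext (funext fun i => ?_) (funext fun i => ?_) <;>
    by_cases hi : i = j <;> simp [swapCoords, hi, hj]

variable [MeasurableSpace α]

theorem measurable_swapCoords (A : Finset ι) : Measurable (swapCoords (α := α) A) := by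
  refine .prodMk (measurable_pi_lambda _ fun i => ?_) (measurable_pi_lambda _ fun i => ?_) <;>
    split_ifs <;> fun_prop

namespace MeasurableEquiv

variable (α) in
def funSplitAt (j : ι) : (ι → α) ≃ᵐ α × ({i // i ≠ j} → α) where
  toEquiv := Equiv.funSplitAt j α
  measurable_toFun := by dsimp [Equiv.funSplitAt, Equiv.piSplitAt]; fun_prop
  measurable_invFun := by
    refine measurable_pi_lambda _ fun i => ?_
    by_cases h : i = j
    · subst h; simpa [Equiv.funSplitAt_symm_apply] using measurable_fst
    · simp only [Equiv.funSplitAt_symm_apply, h, dite_false]; fun_prop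

variable (α) in
def prodFunSplitAt (j : ι) :
    (ι → α) × (ι → α) ≃ᵐ α × α × ({i // i ≠ j} → α) × ({i // i ≠ j} → α) where
  toFun q := (q.1 j, q.2 j, fun i => q.1 i, fun i => q.2 i)
  invFun t := ((funSplitAt α j).symm (t.1, t.2.2.1), (funSplitAt α j).symm (t.2.1, t.2.2.2))
  left_inv q := Prod.ext ((funSplitAt α j).symm_apply_apply q.1)
    ((funSplitAt α j).symm_apply_apply q.2)
  right_inv t := by
    refine Prod.ext (by simp [funSplitAt]) <| Prod.ext (by simp [funSplitAt]) <|
      Prod.ext (funext fun i => ?_) (funext fun i => ?_) <;>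
      simp [funSplitAt, Equiv.funSplitAt_symm_apply, i.2]
  measurable_toFun := by simp only [Equiv.coe_fn_mk]; fun_prop
  measurable_invFun := by simp only [Equiv.coe_fn_symm_mk]; fun_prop

end MeasurableEquiv

theorem prodFunSplitAt_swapCoords_singleton (j : ι) (q : (ι → α) × (ι → α)) :
    MeasurableEquiv.prodFunSplitAt α j (swapCoords {j} q) =
      (q.2 j, q.1 j, fun i : {i // i ≠ j} => q.1 i, fun i : {i // i ≠ j} => q.2 i) := by
  refine Prod.ext (by simp [MeasurableEquiv.prodFunSplitAt, swapCoords]) <|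
    Prod.ext (by simp [MeasurableEquiv.prodFunSplitAt, swapCoords]) <|
    Prod.ext (funext fun i => ?_) (funext fun i => ?_) <;>
    simp [MeasurableEquiv.prodFunSplitAt, swapCoords, i.2]

theorem map_swapCoords_singleton_eq_self_iff (ν : Measure ((ι → α) × (ι → α))) (j : ι) :
    ν.map (swapCoords {j}) = ν ↔
      ν.map (MeasurableEquiv.prodFunSplitAt α j) =
        ν.map (fun q => (q.2 j, q.1 j, fun i : {i // i ≠ j} => q.1 i,
          fun i : {i // i ≠ j} => q.2 i)) := by
  have hcomp : (fun q => (q.2 j, q.1 j, fun i : {i // i ≠ j} => q.1 i,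
      fun i : {i // i ≠ j} => q.2 i)) = MeasurableEquiv.prodFunSplitAt α j ∘ swapCoords {j} :=
    funext fun q => (prodFunSplitAt_swapCoords_singleton j q).symm
  rw [hcomp, ← Measure.map_map (MeasurableEquiv.measurable _) (measurable_swapCoords _),
    (MeasurableEquiv.prodFunSplitAt α j).map_measurableEquiv_injective.eq_iff, eq_comm]

theorem map_swapCoords_eq_self_of_forall_singleton {ν : Measure ((ι → α) × (ι → α))}
    {A : Finset ι} (h : ∀ j ∈ A, ν.map (swapCoords {j}) = ν) : ν.map (swapCoords A) = ν := by
  induction A using Finset.induction_on with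
  | empty => rw [swapCoords_empty, Measure.map_id]
  | insert j A hj ih =>
    rw [swapCoords_insert hj, ← Measure.map_map (measurable_swapCoords _) (measurable_swapCoords _),
      ih fun k hk => h k (Finset.mem_insert_of_mem hk), h j (Finset.mem_insert_self j A)]

end SwapCoords

theorem swap_exchangeability_iff_single_swaps_general
    {Ω : Type*} [MeasurableSpace Ω] (μ : Measure Ω)
    {α : Type*} [MeasurableSpace α]
    (p : ℕ) (X Xt : Ω → Fin p → α)
    (hX : Measurable X) (hXt : Measurable Xt) :
    -- single-swap (quadruple) exchangeability for index j:
    (let quadEq : Fin p → Prop := fun j =>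
      Measure.map (fun ω => (X ω j, Xt ω j,
          fun i : {i : Fin p // i ≠ j} => X ω i,
          fun i : {i : Fin p // i ≠ j} => Xt ω i)) μ =
        Measure.map (fun ω => (Xt ω j, X ω j,
          fun i : {i : Fin p // i ≠ j} => X ω i,
          fun i : {i : Fin p // i ≠ j} => Xt ω i)) μ
    -- full-swap exchangeability for a subset A:
    let swapEq : Finset (Fin p) → Prop := fun A =>
      Measure.map (fun ω =>
          ((fun j => if j ∈ A then Xt ω j else X ω j),
           (fun j => if j ∈ A then X ω j else Xt ω j))) μ =
        Measure.map (fun ω => (X ω, Xt ω)) μ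
    ((∀ A : Finset (Fin p), swapEq A) → ∀ j : Fin p, quadEq j) ∧
      (∀ A : Finset (Fin p), (∀ j ∈ A, quadEq j) → swapEq A)) := by
  intro quadEq swapEq
  have hpair : Measurable fun ω => (X ω, Xt ω) := hX.prodMk hXt
  set ν := μ.map fun ω => (X ω, Xt ω)
  have swapEq_iff (A : Finset (Fin p)) : swapEq A ↔ ν.map (swapCoords A) = ν := by
    rw [Measure.map_map (measurable_swapCoords A) hpair]; rfl
  have quadEq_iff (j : Fin p) : quadEq j ↔ ν.map (swapCoords {j}) = ν := by
    rw [map_swapCoords_singleton_eq_self_iff, Measure.map_map (MeasurableEquiv.measurable _) hpair,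
      Measure.map_map (by fun_prop) hpair]; rfl
  exact ⟨fun h j => (quadEq_iff j).2 ((swapEq_iff {j}).1 (h {j})),
    fun A h => (swapEq_iff A).2 <| map_swapCoords_eq_self_of_forall_singleton
      fun j hj => (quadEq_iff j).1 (h j hj)⟩

theorem swap_exchangeability_iff_single_swaps
    {Ω : Type*} [MeasurableSpace Ω] (μ : Measure Ω) [IsProbabilityMeasure μ]
    {α : Type*} [MeasurableSpace α] [MeasurableSingletonClass α] [Countable α]
    (p : ℕ) (X Xt : Ω → Fin p → α)
    (hX : Measurable X) (hXt : Measurable Xt) :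
    -- single-swap (quadruple) exchangeability for index j:
    (let quadEq : Fin p → Prop := fun j =>
      Measure.map (fun ω => (X ω j, Xt ω j,
          fun i : {i : Fin p // i ≠ j} => X ω i,
          fun i : {i : Fin p // i ≠ j} => Xt ω i)) μ =
        Measure.map (fun ω => (Xt ω j, X ω j,
          fun i : {i : Fin p // i ≠ j} => X ω i,
          fun i : {i : Fin p // i ≠ j} => Xt ω i)) μ
    -- full-swap exchangeability for a subset A:
    let swapEq : Finset (Fin p) → Prop := fun A =>
      Measure.map (fun ω =>
          ((fun j => if j ∈ A then Xt ω j else X ω j),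
           (fun j => if j ∈ A then X ω j else Xt ω j))) μ =
        Measure.map (fun ω => (X ω, Xt ω)) μ
    ((∀ A : Finset (Fin p), swapEq A) → ∀ j : Fin p, quadEq j) ∧
      (∀ A : Finset (Fin p), (∀ j ∈ A, quadEq j) → swapEq A)) :=
  swap_exchangeability_iff_single_swaps_general μ p X Xt hX hXt
end
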